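/- Assume the polyhedral inverse-sequence setup with vertex stars (as in the UV-statement), fix k ∈ ℕ and x ∈ X, and set S_{x,i} = B_{x,i} ∩ P_i^{(l_k)}. Then for each i, g_i^{i+1}(P_{x,i+1}^{(l_k)}) ⊂ S_{x,i} ⊂ P_{x,i}^{(l_k)}, and the fiber of the restricted limit map satisfies (π|_{A_k})^{-1}(x) = lim (S_{x,i}, g_i^{i+1}) = lim (P_{x,i}^{(l_k)}, g_i^{i+1}). -/

import Mathlib

open Set Topology Filter

/-! ### General topological notions -/

/-- Covering dimension at most `n`: every open cover has an open refinement of order `≤ n + 1`. -/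
def CovDimLE (X : Type) [TopologicalSpace X] (n : ℕ) : Prop :=
  ∀ 𝒰 : Set (Set X), (∀ U ∈ 𝒰, IsOpen U) → ⋃₀ 𝒰 = Set.univ →
    ∃ 𝒱 : Set (Set X), (∀ V ∈ 𝒱, IsOpen V) ∧ ⋃₀ 𝒱 = Set.univ ∧
      (∀ V ∈ 𝒱, ∃ U ∈ 𝒰, V ⊆ U) ∧
      ∀ x : X, {V ∈ 𝒱 | x ∈ V}.Finite ∧ {V ∈ 𝒱 | x ∈ V}.ncard ≤ n + 1

/-- A nonempty compactum has trivial shape (the shape of a point) iff every map of it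
into an ANR (equivalently, into an open subset of a Euclidean space) is null-homotopic. -/
def HasTrivialShape (Y : Type) [TopologicalSpace Y] : Prop :=
  Nonempty Y ∧
  ∀ (n : ℕ) (U : Set (EuclideanSpace ℝ (Fin n))), IsOpen U →
    ∀ f : C(Y, U), f.Nullhomotopic

/-- `A` is an absolute neighborhood retract: it is metrizable, and for every closed
embedding of `A` into a metrizable space `M`, the image is a retract of some
neighborhood of it in `M`. -/
def IsANR (A : Type) [TopologicalSpace A] : Prop :=
  TopologicalSpace.MetrizableSpace A ∧
  ∀ (M : Type) [TopologicalSpace M], TopologicalSpace.MetrizableSpace M →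
    ∀ e : A → M, Topology.IsClosedEmbedding e →
      ∃ (U : Set M) (ret : U → A), IsOpen U ∧ Set.range e ⊆ U ∧ Continuous ret ∧
        ∀ (a : A) (h : e a ∈ U), ret ⟨e a, h⟩ = a

/-- Property `UV^k` for a space (to be applied to fibers of maps): for every embedding
into an ANR `A`, every neighborhood `U` of the image contains a smaller neighborhood `V`
such that every map of `S^r`, `0 ≤ r ≤ k`, into `V` is null-homotopic in `U`. -/
def HasPropertyUV (k : ℕ) (Y : Type) [TopologicalSpace Y] : Prop :=
  ∀ (A : Type) [TopologicalSpace A], IsANR A →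
    ∀ e : Y → A, Topology.IsEmbedding e →
      ∀ U : Set A, IsOpen U → Set.range e ⊆ U →
        ∃ V : Set A, IsOpen V ∧ Set.range e ⊆ V ∧ ∃ hVU : V ⊆ U,
          ∀ r : ℕ, r ≤ k →
            ∀ f : C((Metric.sphere (0 : EuclideanSpace ℝ (Fin (r + 1))) 1 : Set _), V),
              ((⟨Set.inclusion hVU, continuous_inclusion hVU⟩ : C(V, U)).comp f).Nullhomotopic

/-- `T` is an Eilenberg–MacLane space of type `K(G, n)`. -/
def IsEilenbergMacLane (G : Type) [AddCommGroup G] (n : ℕ) (T : Type) [TopologicalSpace T] :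
    Prop :=
  PathConnectedSpace T ∧
  ∀ t : T,
    (∀ m : ℕ, m ≠ n → Subsingleton (HomotopyGroup (Fin m) T t)) ∧
    Nonempty (HomotopyGroup (Fin n) T t ≃ G) ∧
    ∀ hn : 0 < n,
      letI : Nonempty (Fin n) := ⟨⟨0, hn⟩⟩
      Nonempty (HomotopyGroup (Fin n) T t ≃* Multiplicative G)

/-- A compactum has trivial reduced Čech cohomology with coefficients in `G` iff
every map of it into an Eilenberg–MacLane space `K(G, n)` (realized as an ANR)
is null-homotopic. -/
def HasTrivialCechCohomology (G : Type) [AddCommGroup G] (Y : Type) [TopologicalSpace Y] :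
    Prop :=
  ∀ (n : ℕ) (T : Type) [TopologicalSpace T], IsANR T → IsEilenbergMacLane G n T →
    ∀ f : C(Y, T), f.Nullhomotopic

/-- Cohomological dimension `dim_G Y ≤ n`: every map from a closed subset of `Y` into a
`K(G, n)` extends over `Y`. -/
def CohomDimLE (G : Type) [AddCommGroup G] (Y : Type) [TopologicalSpace Y] (n : ℕ) : Prop :=
  ∀ A : Set Y, IsClosed A →
    ∀ (T : Type) [TopologicalSpace T], IsANR T → IsEilenbergMacLane G n T →
      ∀ f : C(A, T), ∃ F : C(Y, T), ∀ a : A, F a = f a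

open Set Topology Filter

noncomputable section

/-! ### The Hilbert cube `Q = ∏_{i=1}^∞ I` realized inside `ℕ → ℝ` -/

/-- The ambient space `ℝ^∞` containing the Hilbert cube. -/
abbrev ESp : Type := ℕ → ℝ

/-- The metric `ρ(x, y) = ∑_{i=1}^∞ |x_i - y_i| / 2^i` on the Hilbert cube. -/
noncomputable def rho (x y : ESp) : ℝ := ∑' i : ℕ, |x i - y i| / 2 ^ (i + 1)

/-- The coordinate projection `p_n : Q → I^n` (followed by the identification of
`I^n` with the slice `I^n × {0} ⊆ Q`). -/
def proj (n : ℕ) (x : ESp) : ESp := fun j => if j < n then x j else 0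

/-- The Hilbert cube `Q`. -/
def HCube : Set ESp := {x | ∀ i, x i ∈ Set.Icc (0 : ℝ) 1}

/-- The slice `I^n × {0} ⊆ Q`, the canonical copy of `I^n` in `Q`. -/
def cubeSlice (n : ℕ) : Set ESp := {x ∈ HCube | ∀ j, n ≤ j → x j = 0}

/-- `P × Q_n ⊆ Q = I^n × Q_n`, for a subset `P` of the slice `I^n × {0}`. -/
def tube (P : Set ESp) (n : ℕ) : Set ESp := {x ∈ HCube | proj n x ∈ P}

/-- The data and hypotheses (i)–(vi) of the inverse-sequence setup of Lemma 3.1. -/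
structure InvSeqSetup where
  n : ℕ → ℕ
  P : ℕ → Set ESp
  δ : ℕ → ℝ
  ε : ℕ → ℝ
  /-- the bonding maps `g_i^{i+1} : P_{i+1} → P_i` -/
  g : ℕ → ESp → ESp
  P_sub : ∀ i, P i ⊆ cubeSlice (n i)
  P_cpt : ∀ i, IsCompact (P i)
  δ_pos : ∀ i, 0 < δ i
  ε_pos : ∀ i, 0 < ε i
  g_maps : ∀ i, Set.MapsTo (g i) (P (i + 1)) (P i)
  g_cont : ∀ i, ContinuousOn (g i) (P (i + 1))
  /-- (i) -/
  hyp1 : ∀ i, ∀ u ∈ HCube, ∀ v ∈ HCube,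
    rho u v ≤ ε (i + 1) → rho (proj (n i) u) (proj (n i) v) < δ i
  /-- (ii) -/
  hyp2 : ∀ i, n i < n (i + 1)
  /-- (iii) -/
  hyp3 : ∀ i, 9 / 2 ^ n i < ε i
  /-- (iv) -/
  hyp4 : ∀ i, ∀ x ∈ P (i + 1), rho (g i x) (proj (n i) x) < δ i
  /-- (v) -/
  hyp5 : ∀ i, δ i < 1 / 2 ^ (n i - 1)
  /-- (vi) -/
  hyp6 : ∀ i, tube (P (i + 1)) (n (i + 1)) ⊆ tube (P i) (n i)

namespace InvSeqSetup

/-- `X = ∩_{i=1}^∞ P_i × Q_{n_i}`. -/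
def X (S : InvSeqSetup) : Set ESp := ⋂ i, tube (S.P i) (S.n i)

/-- `Z = lim (P_i, g_i^{i+1})`: the space of threads of the inverse sequence. -/
abbrev Thread (S : InvSeqSetup) : Type :=
  {a : ℕ → ESp // (∀ i, a i ∈ S.P i) ∧ ∀ i, S.g i (a (i + 1)) = a i}

/-- `π : Z → X` is the limit map, `π(z) = lim_{i→∞} a_i` for a thread `z = (a_i)`. -/
def IsLimitMap (S : InvSeqSetup) (π : S.Thread → ESp) : Prop :=
  ∀ z : S.Thread, Filter.Tendsto (fun i => rho (z.1 i) (π z)) Filter.atTop (nhds 0)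

/-- `B_{x,i} = N̄(p_{n_i}(x), 2δ_i) ∩ P_i`. -/
def B (S : InvSeqSetup) (x : ESp) (i : ℕ) : Set ESp :=
  {y ∈ cubeSlice (S.n i) | rho y (proj (S.n i) x) ≤ 2 * S.δ i} ∩ S.P i

/-- `B^#_{x,i} = N̄(p_{n_i}(x), ε_i) ∩ P_i`. -/
def Bs (S : InvSeqSetup) (x : ESp) (i : ℕ) : Set ESp :=
  {y ∈ cubeSlice (S.n i) | rho y (proj (S.n i) x) ≤ S.ε i} ∩ S.P i

end InvSeqSetup

end

open Set Topology Geometry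

/-! ### Polyhedra, triangulations, skeleta, subdivisions, stars, collapsibility -/

variable {V : Type} [AddCommGroup V] [Module ℝ V]

/-- The subpolyhedron `|τ^{(k)}|` spanned by the `k`-skeleton of a simplicial complex. -/
def skelSet (K : Geometry.SimplicialComplex ℝ V) (k : ℕ) : Set V :=
  ⋃ s ∈ {s ∈ K.faces | s.card ≤ k + 1}, convexHull ℝ (s : Set V)

/-- `K` is a subdivision of `K'`. -/
def IsSubdivisionOf (K K' : Geometry.SimplicialComplex ℝ V) : Prop :=
  K.space = K'.space ∧
  ∀ s ∈ K.faces, ∃ t ∈ K'.faces, convexHull ℝ (s : Set V) ⊆ convexHull ℝ (t : Set V)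

/-- `K'` is the restriction of the simplicial complex `K` to the set `A`:
its faces are exactly the faces of `K` lying in `A`. -/
def RestrictsTo (K : Geometry.SimplicialComplex ℝ V) (A : Set V)
    (K' : Geometry.SimplicialComplex ℝ V) : Prop :=
  K'.faces = {s ∈ K.faces | convexHull ℝ (s : Set V) ⊆ A}

/-- An elementary collapse from `K` to `K'` through a free face `σ`. -/
def ElemCollapse (K K' : Geometry.SimplicialComplex ℝ V) : Prop :=
  ∃ σ τ : Finset V, σ ∈ K.faces ∧ τ ∈ K.faces ∧ σ ⊂ τ ∧
    (∀ ρ ∈ K.faces, σ ⊆ ρ → ρ = σ ∨ ρ = τ) ∧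
    K'.faces = K.faces \ {ρ | σ ⊆ ρ}

/-- A simplicial complex is collapsible if it collapses to a single vertex. -/
def IsCollapsible (K : Geometry.SimplicialComplex ℝ V) : Prop :=
  ∃ K' : Geometry.SimplicialComplex ℝ V,
    Relation.ReflTransGen ElemCollapse K K' ∧ ∃ v : V, K'.faces = {{v}}

/-- `g` is a simplicial map from `K` to `K'`: it sends vertices of any face of `K` into
a face of `K'` and is affine on each closed simplex of `K`. -/
def IsSimplicialMapOn (K K' : Geometry.SimplicialComplex ℝ V) (g : V → V) : Prop :=
  (∀ s ∈ K.faces, ∃ t ∈ K'.faces, g '' (s : Set V) ⊆ (t : Set V)) ∧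
  ∀ s ∈ K.faces, ∀ w : V → ℝ, (∀ v ∈ s, 0 ≤ w v) → ∑ v ∈ s, w v = 1 →
    g (∑ v ∈ s, w v • v) = ∑ v ∈ s, w v • g v

/-- The closed star of a vertex `v` in a simplicial complex `K`: the union of all closed
simplexes of `K` containing `v`. -/
def closedStar (K : Geometry.SimplicialComplex ℝ V) (v : V) : Set V :=
  ⋃ s ∈ {s ∈ K.faces | v ∈ s}, convexHull ℝ (s : Set V)

/-- The boundary `∂σ` of a simplex with vertex set `s`: the union of its proper faces. -/
def simplexBoundary (s : Finset V) : Set V :=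
  letI := Classical.decEq V
  ⋃ v ∈ s, convexHull ℝ ((s.erase v : Finset V) : Set V)

/-- The bundled inclusion map between subspaces. -/
def inclusionMap {W : Type} [TopologicalSpace W] {A B : Set W} (h : A ⊆ B) : C(A, B) :=
  ⟨Set.inclusion h, continuous_inclusion h⟩

/-- `g` is a generator of the abelian group `M` (i.e. `M = ⟨g⟩`). -/
def IsZGenerator {M : Type} [AddCommGroup M] (g : M) : Prop :=
  ∀ x : M, ∃ k : ℤ, x = k • g

/-! ### The polyhedral inverse-sequence setup -/

/-- The polyhedral inverse-sequence setup of Corollary 2.2: each `P_i` is a nonempty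
compact subpolyhedron of `I^{n_i}` with a triangulation `τ̃_i` and a subdivision `τ_i`
of mesh `< δ_i` which is collapsible on every simplex of `τ̃_i`, and the bonding maps
are simplicial from `τ_{i+1}` to `τ_i`. -/
structure PolySetup extends InvSeqSetup where
  /-- the triangulations `τ_i` of `P_i` -/
  tri : ℕ → Geometry.SimplicialComplex ℝ ESp
  /-- the coarser triangulations `τ̃_i` of `P_i` -/
  triT : ℕ → Geometry.SimplicialComplex ℝ ESp
  P_ne : ∀ i, (P i).Nonempty
  tri_space : ∀ i, (tri i).space = P i
  triT_space : ∀ i, (triT i).space = P i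
  tri_subdiv : ∀ i, IsSubdivisionOf (tri i) (triT i)
  /-- `mesh τ_i < δ_i` -/
  tri_mesh : ∀ i, ∀ s ∈ (tri i).faces, ∀ x ∈ convexHull ℝ (s : Set ESp),
    ∀ y ∈ convexHull ℝ (s : Set ESp), rho x y < δ i
  /-- `τ_i` restricted to any simplex `γ` of `τ̃_i` is collapsible -/
  tri_collapsible : ∀ i, ∀ γ ∈ (triT i).faces, ∃ K : Geometry.SimplicialComplex ℝ ESp,
    RestrictsTo (tri i) (convexHull ℝ (γ : Set ESp)) K ∧ IsCollapsible K
  /-- each `g_i^{i+1}` is simplicial from `τ_{i+1}` to `τ_i` -/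
  g_simp : ∀ i, IsSimplicialMapOn (tri (i + 1)) (tri i) (g i)

namespace PolySetup

/-- The subpolyhedron `P_i^{(k)}` of `P_i`. -/
def skelP (S : PolySetup) (i k : ℕ) : Set ESp := skelSet (S.tri i) k

/-- `A = lim (P_i^{(l)}, g_i^{i+1})`, a closed subspace of `Z`. -/
def A (S : PolySetup) (l : ℕ) : Set S.toInvSeqSetup.Thread :=
  {z | ∀ i, z.1 i ∈ S.skelP i l}

/-- A system of contractible subdivided vertex stars: for each `x ∈ X` and `i`, the
polyhedron `P_{x,i}` is the closed star of a vertex of `τ̃_i` (subdivided by `τ_i`),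
it is contractible, and `B_{x,i} ⊆ P_{x,i} ⊆ B^#_{x,i}`. -/
def IsVertexStarSystem (S : PolySetup) (star : ESp → ℕ → Set ESp) : Prop :=
  ∀ x ∈ S.toInvSeqSetup.X, ∀ i : ℕ,
    (∃ v : ESp, {v} ∈ (S.triT i).faces ∧ star x i = closedStar (S.triT i) v) ∧
    ContractibleSpace ↥(star x i) ∧
    S.toInvSeqSetup.B x i ⊆ star x i ∧ star x i ⊆ S.toInvSeqSetup.Bs x i

end PolySetup

/-!
Consecutive points of a thread `(z_i)` are `3 / 2^{n_i}`-close (a `δ_i`-move by the bonding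
map plus the truncation `p_{n_i}`), and as the `n_i` grow strictly these distances sum to at
most `6 / 2^{n_i} < ε_i`. Hence a thread over `x` satisfies
`ρ(z_{i+1}, x) ≤ ε_{i+1}`, and conditions (i) and (iv) put `z_i = g_i(z_{i+1})` within `2δ_i` of
`p_{n_i}(x)`, i.e. in `B_{x,i}`; the same estimate applied to a point of
`P_{x,i+1} ⊆ B^#_{x,i+1}` gives the first inclusion. Conversely, threads in the `B_{x,i}` converge
to `x`, so their limit is `x`. Simplicial maps preserve skeleta, which takes care of `P^{(l_k)}`.
-/

section HilbertCubeMetric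

variable {u v w : ESp}

lemma proj_mem_HCube (hu : u ∈ HCube) (n : ℕ) : proj n u ∈ HCube := by
  intro j
  unfold proj
  split_ifs
  exacts [hu j, ⟨le_rfl, zero_le_one⟩]

lemma proj_proj {m n : ℕ} (h : m ≤ n) (x : ESp) : proj m (proj n x) = proj m x := by
  funext j
  unfold proj
  split_ifs <;> first | rfl | omega

lemma abs_sub_le_one_of_mem_HCube (hu : u ∈ HCube) (hv : v ∈ HCube) (j : ℕ) :
    |u j - v j| ≤ 1 :=
  abs_sub_le_of_nonneg_of_le (hu j).1 (hu j).2 (hv j).1 (hv j).2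

lemma summable_rho (hu : u ∈ HCube) (hv : v ∈ HCube) :
    Summable fun j => |u j - v j| / 2 ^ (j + 1) := by
  refine (summable_geometric_two' 1).of_nonneg_of_le (fun j => by positivity) fun j => ?_
  calc |u j - v j| / 2 ^ (j + 1) ≤ 1 / 2 ^ (j + 1) := by
        gcongr; exact abs_sub_le_one_of_mem_HCube hu hv j
    _ = 1 / 2 / 2 ^ j := by rw [div_div, ← pow_succ']

lemma rho_nonneg (u v : ESp) : 0 ≤ rho u v :=
  tsum_nonneg fun _ => by positivity

lemma rho_self (u : ESp) : rho u u = 0 := by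
  simp [rho]

lemma rho_comm (u v : ESp) : rho u v = rho v u := by
  simp only [rho, abs_sub_comm]

lemma rho_triangle (hu : u ∈ HCube) (hv : v ∈ HCube) (hw : w ∈ HCube) :
    rho u w ≤ rho u v + rho v w := by
  rw [rho, rho, rho, ← (summable_rho hu hv).tsum_add (summable_rho hv hw)]
  refine (summable_rho hu hw).tsum_le_tsum (fun j => ?_)
    ((summable_rho hu hv).add (summable_rho hv hw))
  rw [← add_div]
  gcongr
  exact abs_sub_le _ _ _

lemma eq_of_rho_eq_zero (hu : u ∈ HCube) (hv : v ∈ HCube) (h : rho u v = 0) : u = v := by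
  have hsum := (summable_rho hu hv).hasSum
  rw [rho] at h
  rw [h, hasSum_zero_iff_of_nonneg fun _ => by positivity] at hsum
  funext j
  simpa [sub_eq_zero] using congrFun hsum j

lemma rho_proj_le (hu : u ∈ HCube) (n : ℕ) : rho u (proj n u) ≤ (1 / 2) ^ n := by
  have hs := summable_rho hu (proj_mem_HCube hu n)
  have hhead : ∑ j ∈ Finset.range n, |u j - proj n u j| / 2 ^ (j + 1) = 0 :=
    Finset.sum_eq_zero fun j hj => by simp [proj, Finset.mem_range.mp hj]
  rw [rho, ← hs.sum_add_tsum_nat_add n, hhead, zero_add]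
  calc ∑' j, |u (j + n) - proj n u (j + n)| / 2 ^ (j + n + 1)
      ≤ ∑' j : ℕ, 1 / 2 ^ n / 2 / 2 ^ j := by
        refine ((summable_nat_add_iff n).2 hs).tsum_le_tsum (fun j => ?_)
          (summable_geometric_two' _)
        calc |u (j + n) - proj n u (j + n)| / 2 ^ (j + n + 1) ≤ 1 / 2 ^ (j + n + 1) := by
              gcongr; exact abs_sub_le_one_of_mem_HCube hu (proj_mem_HCube hu n) _
          _ = 1 / 2 ^ n / 2 / 2 ^ j := by rw [div_div, div_div, pow_succ, pow_add]; ring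
    _ = (1 / 2) ^ n := by rw [tsum_geometric_two', one_div_pow]

end HilbertCubeMetric

namespace InvSeqSetup

variable (S : InvSeqSetup)

lemma mem_HCube_of_mem_P {i : ℕ} {y : ESp} (hy : y ∈ S.P i) : y ∈ HCube :=
  (S.P_sub i hy).1

lemma mem_HCube_of_mem_X {x : ESp} (hx : x ∈ S.X) : x ∈ HCube :=
  (mem_iInter.mp hx 0).1

lemma thread_mem_HCube (z : S.Thread) (i : ℕ) : z.1 i ∈ HCube :=
  S.mem_HCube_of_mem_P (z.2.1 i)

lemma δ_le (i : ℕ) : S.δ i ≤ 2 * (1 / 2) ^ S.n i := by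
  refine (S.hyp5 i).le.trans ?_
  cases S.n i with
  | zero => norm_num
  | succ m => exact le_of_eq (by rw [Nat.add_sub_cancel, pow_succ, one_div_pow]; ring)

lemma tendsto_half_pow_n : Tendsto (fun i => (1 / 2 : ℝ) ^ S.n i) atTop (𝓝 0) :=
  (tendsto_pow_atTop_nhds_zero_of_lt_one (by norm_num) (by norm_num)).comp
    (strictMono_nat_of_lt_succ S.hyp2).tendsto_atTop

lemma g_mem_B_of_rho_le {i : ℕ} {x y v : ESp} (hy : y ∈ S.P (i + 1)) (hv : v ∈ HCube)
    (hyv : rho y v ≤ S.ε (i + 1)) (hvx : proj (S.n i) v = proj (S.n i) x) :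
    S.g i y ∈ S.B x i := by
  have hgy := S.g_maps i hy
  have hyH := S.mem_HCube_of_mem_P hy
  have hproj := S.hyp1 i y hyH v hv hyv
  have hmove := S.hyp4 i y hy
  have htri := rho_triangle (S.mem_HCube_of_mem_P hgy) (proj_mem_HCube hyH (S.n i))
    (proj_mem_HCube hv (S.n i))
  rw [hvx] at hproj htri
  exact ⟨⟨S.P_sub i hgy, by linarith⟩, hgy⟩

lemma rho_thread_succ_le (z : S.Thread) (i : ℕ) :
    rho (z.1 i) (z.1 (i + 1)) ≤ 3 * (1 / 2) ^ S.n i := by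
  have hz := S.thread_mem_HCube z
  have hmove := S.hyp4 i _ (z.2.1 (i + 1))
  rw [z.2.2 i] at hmove
  have htri := rho_triangle (hz i) (proj_mem_HCube (hz (i + 1)) (S.n i)) (hz (i + 1))
  have htrunc := rho_proj_le (hz (i + 1)) (S.n i)
  rw [rho_comm] at htrunc
  linarith [S.δ_le i]

lemma rho_thread_le (z : S.Thread) (i t : ℕ) :
    rho (z.1 i) (z.1 (i + t)) ≤ 6 * (1 / 2) ^ S.n i := by
  induction t generalizing i with
  | zero => rw [add_zero, rho_self]; positivity
  | succ t ih =>
    have hpow : (1 / 2 : ℝ) ^ S.n (i + 1) ≤ (1 / 2) ^ S.n i * (1 / 2) := by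
      rw [← pow_succ]
      exact pow_le_pow_of_le_one (by norm_num) (by norm_num) (S.hyp2 i)
    have hz := S.thread_mem_HCube z
    have htri := rho_triangle (hz i) (hz (i + 1)) (hz (i + (t + 1)))
    rw [show i + (t + 1) = i + 1 + t by omega] at htri ⊢
    linarith [ih (i + 1), S.rho_thread_succ_le z i]

variable {S} {π : S.Thread → ESp}

lemma rho_thread_limit_le (hπ : S.IsLimitMap π) (z : S.Thread) (hz : π z ∈ HCube) (i : ℕ) :
    rho (z.1 i) (π z) ≤ 6 * (1 / 2) ^ S.n i := by
  have hlim := ((hπ z).comp (tendsto_add_atTop_nat i)).const_add (6 * (1 / 2) ^ S.n i)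
  rw [add_zero] at hlim
  refine ge_of_tendsto' hlim fun t => ?_
  have htri := rho_triangle (S.thread_mem_HCube z i) (S.thread_mem_HCube z (i + t)) hz
  simp only [Function.comp, add_comm t i]
  linarith [S.rho_thread_le z i t]

lemma thread_mem_B_of_isLimitMap (hπ : S.IsLimitMap π) (z : S.Thread) (hz : π z ∈ HCube)
    (i : ℕ) : z.1 i ∈ S.B (π z) i := by
  rw [← z.2.2 i]
  refine S.g_mem_B_of_rho_le (z.2.1 (i + 1)) hz ?_ rfl
  have hε : 9 * (1 / 2 : ℝ) ^ S.n (i + 1) < S.ε (i + 1) := by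
    rw [one_div_pow, ← div_eq_mul_one_div]
    exact S.hyp3 (i + 1)
  have hpos : (0 : ℝ) < (1 / 2) ^ S.n (i + 1) := by positivity
  linarith [S.rho_thread_limit_le hπ z hz (i + 1)]

lemma limit_eq_of_forall_mem_B (hπ : S.IsLimitMap π) (z : S.Thread) (hz : π z ∈ HCube)
    {x : ESp} (hx : x ∈ HCube) (hB : ∀ i, z.1 i ∈ S.B x i) : π z = x := by
  refine eq_of_rho_eq_zero hz hx (le_antisymm ?_ (rho_nonneg _ _))
  have hbound : ∀ i, rho (π z) x ≤ rho (z.1 i) (π z) + 5 * (1 / 2) ^ S.n i := fun i => by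
    have hzi := S.thread_mem_HCube z i
    have hxi := proj_mem_HCube hx (S.n i)
    have htri₁ := rho_triangle hz hzi hx
    have htri₂ := rho_triangle hzi hxi hx
    have htrunc := rho_proj_le hx (S.n i)
    rw [rho_comm] at htrunc
    linarith [rho_comm (π z) (z.1 i), (hB i).1.2, S.δ_le i]
  have hlim := (hπ z).add (S.tendsto_half_pow_n.const_mul 5)
  simpa using ge_of_tendsto' hlim hbound

end InvSeqSetup

lemma IsSimplicialMapOn.mapsTo_skelSet {K K' : SimplicialComplex ℝ V} {g : V → V}
    (hg : IsSimplicialMapOn K K' g) (k : ℕ) : MapsTo g (skelSet K k) (skelSet K' k) := by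
  classical
  intro y hy
  simp only [skelSet, mem_iUnion, mem_ofPred_eq, exists_prop] at hy ⊢
  obtain ⟨s, ⟨hs, hcard⟩, hys⟩ := hy
  rw [Finset.convexHull_eq] at hys
  obtain ⟨w, hw₀, hw₁, rfl⟩ := hys
  simp only [Finset.centerMass_eq_of_sum_1 _ _ hw₁, id_eq]
  obtain ⟨t, ht, hst⟩ := hg.1 s hs
  have himage : s.image g ∈ K'.faces :=
    K'.down_closed ht (by simpa [← Finset.coe_subset] using hst)
      ((K.nonempty_of_mem_faces hs).image g)
  refine ⟨s.image g, ⟨himage, Finset.card_image_le.trans hcard⟩, ?_⟩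
  rw [hg.2 s hs w hw₀ hw₁]
  have hmem := Finset.centerMass_mem_convexHull s hw₀ (by rw [hw₁]; norm_num) (z := g)
    fun v hv => Finset.mem_coe.mpr (Finset.mem_image_of_mem g hv)
  rwa [Finset.centerMass_eq_of_sum_1 _ _ hw₁] at hmem

lemma PolySetup.g_mem_B_inter_skelP (S : PolySetup) {star : ESp → ℕ → Set ESp}
    (hstar : S.IsVertexStarSystem star) {x : ESp} (hx : x ∈ S.X) {i l : ℕ} {y : ESp}
    (hy : y ∈ star x (i + 1) ∩ S.skelP (i + 1) l) :
    S.g i y ∈ S.B x i ∩ S.skelP i l := by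
  obtain ⟨⟨-, hyx⟩, hyP⟩ := (hstar x hx (i + 1)).2.2.2 hy.1
  exact ⟨S.g_mem_B_of_rho_le hyP (proj_mem_HCube (S.mem_HCube_of_mem_X hx) _) hyx
      (proj_proj (S.hyp2 i).le x),
    (S.g_simp i).mapsTo_skelSet l hy.2⟩

theorem statement10_general (S : PolySetup) (π : S.toInvSeqSetup.Thread → ESp)
    (hπ : S.toInvSeqSetup.IsLimitMap π)
    (hπX : ∀ z : S.toInvSeqSetup.Thread, π z ∈ S.toInvSeqSetup.X)
    (star : ESp → ℕ → Set ESp) (hstar : S.IsVertexStarSystem star)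
    (l : ℕ → ℕ) (k : ℕ)
    (x : ESp) (hx : x ∈ S.toInvSeqSetup.X) :
    (∀ i, (∀ y ∈ star x (i + 1) ∩ S.skelP (i + 1) (l k),
        S.g i y ∈ S.toInvSeqSetup.B x i ∩ S.skelP i (l k)) ∧
      S.toInvSeqSetup.B x i ∩ S.skelP i (l k) ⊆ star x i ∩ S.skelP i (l k)) ∧
    ({z : S.toInvSeqSetup.Thread | z ∈ S.A (l k) ∧ π z = x} =
      {z : S.toInvSeqSetup.Thread |
        ∀ i, z.1 i ∈ S.toInvSeqSetup.B x i ∩ S.skelP i (l k)}) ∧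
    ({z : S.toInvSeqSetup.Thread |
        ∀ i, z.1 i ∈ S.toInvSeqSetup.B x i ∩ S.skelP i (l k)} =
      {z : S.toInvSeqSetup.Thread | ∀ i, z.1 i ∈ star x i ∩ S.skelP i (l k)}) := by
  have hB_star : ∀ i, S.B x i ∩ S.skelP i (l k) ⊆ star x i ∩ S.skelP i (l k) :=
    fun i => inter_subset_inter_left _ (hstar x hx i).2.2.1
  have hπH : ∀ z, π z ∈ HCube := fun z => S.mem_HCube_of_mem_X (hπX z)
  refine ⟨fun i => ⟨fun y hy => S.g_mem_B_inter_skelP hstar hx hy, hB_star i⟩, ?_, ?_⟩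
  · ext z
    constructor
    · rintro ⟨hzA, rfl⟩ i
      exact ⟨InvSeqSetup.thread_mem_B_of_isLimitMap hπ z (hπH z) i, hzA i⟩
    · intro hz
      exact ⟨fun i => (hz i).2, InvSeqSetup.limit_eq_of_forall_mem_B hπ z (hπH z)
        (S.mem_HCube_of_mem_X hx) fun i => (hz i).1⟩
  · ext z
    refine ⟨fun hz i => hB_star i (hz i), fun hz i => ?_⟩
    rw [← z.2.2 i]
    exact S.g_mem_B_inter_skelP hstar hx (hz (i + 1))

/-- in the polyhedral inverse-sequence setup with contractible vertex
stars, fix `k` and `x ∈ X` and set `S_{x,i} = B_{x,i} ∩ P_i^{(l_k)}`. Then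
`g_i^{i+1}(P_{x,i+1}^{(l_k)}) ⊆ S_{x,i} ⊆ P_{x,i}^{(l_k)}` for each `i`, and the fiber of
`π|_{A_k}` over `x` satisfies
`(π|_{A_k})⁻¹(x) = lim (S_{x,i}, g_i^{i+1}) = lim (P_{x,i}^{(l_k)}, g_i^{i+1})`. -/
theorem statement10 (S : PolySetup) (π : S.toInvSeqSetup.Thread → ESp)
    (hπ : S.toInvSeqSetup.IsLimitMap π)
    (hπX : ∀ z : S.toInvSeqSetup.Thread, π z ∈ S.toInvSeqSetup.X) (hπc : Continuous π)
    (star : ESp → ℕ → Set ESp) (hstar : S.IsVertexStarSystem star)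
    (l : ℕ → ℕ) (hl : Monotone l) (hl1 : ∀ k, 1 ≤ l k) (k : ℕ)
    (x : ESp) (hx : x ∈ S.toInvSeqSetup.X) :
    (∀ i, (∀ y ∈ star x (i + 1) ∩ S.skelP (i + 1) (l k),
        S.g i y ∈ S.toInvSeqSetup.B x i ∩ S.skelP i (l k)) ∧
      S.toInvSeqSetup.B x i ∩ S.skelP i (l k) ⊆ star x i ∩ S.skelP i (l k)) ∧
    ({z : S.toInvSeqSetup.Thread | z ∈ S.A (l k) ∧ π z = x} =
      {z : S.toInvSeqSetup.Thread |
        ∀ i, z.1 i ∈ S.toInvSeqSetup.B x i ∩ S.skelP i (l k)}) ∧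
    ({z : S.toInvSeqSetup.Thread |
        ∀ i, z.1 i ∈ S.toInvSeqSetup.B x i ∩ S.skelP i (l k)} =
      {z : S.toInvSeqSetup.Thread | ∀ i, z.1 i ∈ star x i ∩ S.skelP i (l k)}) :=
  statement10_general S π hπ hπX star hstar l k x hx
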